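/- arXiv:1308.1993 — 2 statements merged into one kernel-verified Lean document; each statement's English description precedes it below -/
import Mathlib

section
/- Let Ω ⊆ ℝⁿ be a nonempty closed hyper-rectangle and g : Ω → ℝⁿ a continuously differentiable map satisfying: ∂gᵢ/∂xⱼ(x) ≥ 0 for all i ≠ j and ∑ᵢ ∂gᵢ/∂xⱼ(x) ≤ 0 for all j, at every x ∈ Ω. Suppose that for every proper nonempty subset K ⊊ {1,…,n} there exist i ∈ K and j ∉ K with ∂gᵢ/∂xⱼ(x) > 0 for all x ∈ Ω. Then for all x ≠ y in Ω with neither x < y componentwise nor y < x componentwise, ∑ᵢ sgn(xᵢ − yᵢ)(gᵢ(x) − gᵢ(y)) < 0. -/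
/-!
Put `d = x - y` and `s = sign d`. By the mean value theorem applied to `w ↦ ∑ᵢ sᵢ gᵢ(w)` on the
segment `[y, x] ⊆ Ω`, the sum equals `∑ᵢ sᵢ (J d)ᵢ` for the Jacobian `J` at some point of `Ω`.
Since `sᵢ dⱼ Jᵢⱼ ≤ |dⱼ| Jᵢⱼ` for a Metzler matrix, this is at most `∑ⱼ |dⱼ| ∑ᵢ Jᵢⱼ ≤ 0`, and the
first inequality is strict as soon as `Jᵢⱼ > 0` for a pair with `dⱼ ≠ 0` and `sᵢ dⱼ ≤ 0`.
Irreducibility supplies such a pair: apply it to the zero set of `d` if that is nonempty, and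
otherwise to the set where `d > 0`, which is then proper and nonempty because `x, y` are not
strictly ordered.
-/

open Finset Matrix

namespace Real

lemma sign_mul_self_eq_abs (r : ℝ) : sign r * r = |r| := by
  rcases lt_trichotomy r 0 with h | rfl | h
  · rw [sign_of_neg h, abs_of_neg h, neg_one_mul]
  · simp
  · rw [sign_of_pos h, abs_of_pos h, one_mul]

lemma sign_mul_le_abs (s r : ℝ) : sign s * r ≤ |r| := by
  rcases sign_apply_eq s with h | h | h <;> simp [h, neg_le_abs, le_abs_self]

end Real

section Metzler

variable {ι : Type*}

lemma sign_mul_mul_le_mul_abs {J : Matrix ι ι ℝ} (hoff : ∀ i j, i ≠ j → 0 ≤ J i j)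
    (d : ι → ℝ) (i j : ι) : Real.sign (d i) * (J i j * d j) ≤ J i j * |d j| := by
  rcases eq_or_ne i j with rfl | hij
  · rw [mul_left_comm, Real.sign_mul_self_eq_abs]
  · rw [mul_left_comm]
    exact mul_le_mul_of_nonneg_left (Real.sign_mul_le_abs _ _) (hoff i j hij)

theorem sum_sign_mul_mulVec_lt_zero [Fintype ι] {J : Matrix ι ι ℝ}
    (hoff : ∀ i j, i ≠ j → 0 ≤ J i j) (hcol : ∀ j, ∑ i, J i j ≤ 0) (d : ι → ℝ) {i₀ j₀ : ι}
    (hd : d j₀ ≠ 0) (hsign : Real.sign (d i₀) * d j₀ ≤ 0) (hJ : 0 < J i₀ j₀) :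
    ∑ i, Real.sign (d i) * (J *ᵥ d) i < 0 := by
  have hle := sign_mul_mul_le_mul_abs hoff d
  have hlt : Real.sign (d i₀) * (J i₀ j₀ * d j₀) < J i₀ j₀ * |d j₀| := by
    rw [mul_left_comm]
    exact (mul_nonpos_of_nonneg_of_nonpos hJ.le hsign).trans_lt (mul_pos hJ (abs_pos.2 hd))
  calc ∑ i, Real.sign (d i) * (J *ᵥ d) i = ∑ j, ∑ i, Real.sign (d i) * (J i j * d j) := by
        simp only [mulVec, dotProduct, mul_sum]
        exact sum_comm
    _ < ∑ j, ∑ i, J i j * |d j| :=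
        sum_lt_sum (fun j _ => sum_le_sum fun i _ => hle i j)
          ⟨j₀, mem_univ _, sum_lt_sum (fun i _ => hle i j₀) ⟨i₀, mem_univ _, hlt⟩⟩
    _ = ∑ j, (∑ i, J i j) * |d j| := by simp only [sum_mul]
    _ ≤ 0 := sum_nonpos fun j _ => mul_nonpos_of_nonpos_of_nonneg (hcol j) (abs_nonneg _)

lemma exists_sign_mul_nonpos_of_irreducible [Fintype ι] {P : ι → ι → Prop}
    (hirr : ∀ K : Finset ι, K.Nonempty → K ≠ univ → ∃ i ∈ K, ∃ j ∉ K, P i j)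
    {d : ι → ℝ} (hd : d ≠ 0) (hneg : ¬∀ i, d i < 0) (hpos : ¬∀ i, 0 < d i) :
    ∃ i j, d j ≠ 0 ∧ Real.sign (d i) * d j ≤ 0 ∧ P i j := by
  classical
  by_cases hzero : ∃ i, d i = 0
  · obtain ⟨k, hk⟩ := hzero
    obtain ⟨l, hl⟩ := Function.ne_iff.1 hd
    obtain ⟨i, hi, j, hj, hP⟩ := hirr {i | d i = 0} ⟨k, by simpa using hk⟩
      fun h => hl (by simpa using eq_univ_iff_forall.1 h l)
    simp only [mem_filter, mem_univ, true_and] at hi hj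
    exact ⟨i, j, hj, by simp [hi], hP⟩
  · push Not at hzero hneg hpos
    obtain ⟨k, hk⟩ := hneg
    obtain ⟨l, hl⟩ := hpos
    obtain ⟨i, hi, j, hj, hP⟩ := hirr {i | 0 < d i} ⟨k, by simpa using hk.lt_of_ne' (hzero k)⟩
      fun h => (by simpa [hl.not_gt] using eq_univ_iff_forall.1 h l)
    simp only [mem_filter, mem_univ, true_and, not_lt] at hi hj
    refine ⟨i, j, hzero j, ?_, hP⟩
    rwa [Real.sign_of_pos hi, one_mul]

end Metzler

lemma exists_mem_segment_sum_mul_sub_eq {ι : Type*} [Fintype ι] {g : (ι → ℝ) → ι → ℝ}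
    (hg : Differentiable ℝ g) (c x y : ι → ℝ) :
    ∃ z ∈ segment ℝ y x, ∑ i, c i * (g x i - g y i) = ∑ i, c i * fderiv ℝ g z (x - y) i := by
  have hf : ∀ z ∈ Set.univ, HasFDerivWithinAt (fun w => ∑ i, c i * g w i)
      (∑ i, c i • (ContinuousLinearMap.proj i).comp (fderiv ℝ g z)) Set.univ z := fun z _ =>
    (HasFDerivAt.fun_sum fun i _ =>
      (hasFDerivAt_pi'.1 (hg z).hasFDerivAt i).const_mul (c i)).hasFDerivWithinAt
  obtain ⟨z, hz, heq⟩ := domain_mvt hf convex_univ (Set.mem_univ y) (Set.mem_univ x)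
  refine ⟨z, hz, ?_⟩
  simpa [← sum_sub_distrib, mul_sub] using heq

theorem stmt_2_general (n : ℕ) (a b : Fin n → ℝ)
    (Ω : Set (Fin n → ℝ)) (hΩ : Ω = Set.univ.pi fun i => Set.Icc (a i) (b i))
    (g : (Fin n → ℝ) → (Fin n → ℝ)) (hg : ContDiff ℝ 1 g)
    (hcoop : ∀ x ∈ Ω, ∀ i j, i ≠ j → 0 ≤ fderiv ℝ g x (Pi.single j 1) i)
    (hcol : ∀ x ∈ Ω, ∀ j, ∑ i, fderiv ℝ g x (Pi.single j 1) i ≤ 0)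
    (hirr : ∀ K : Finset (Fin n), K.Nonempty → K ≠ Finset.univ →
      ∃ i ∈ K, ∃ j ∉ K, ∀ x ∈ Ω, 0 < fderiv ℝ g x (Pi.single j 1) i) :
    ∀ x ∈ Ω, ∀ y ∈ Ω, x ≠ y →
      ¬(∀ i, x i < y i) → ¬(∀ i, y i < x i) →
      ∑ i, Real.sign (x i - y i) * (g x i - g y i) < 0 := by
  intro x hx y hy hxy hlt hgt
  have hconv : Convex ℝ Ω := hΩ ▸ convex_pi fun i _ => convex_Icc (a i) (b i)
  obtain ⟨z, hz, heq⟩ := exists_mem_segment_sum_mul_sub_eq (hg.differentiable one_ne_zero)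
    (fun i => Real.sign (x i - y i)) x y
  have hzΩ : z ∈ Ω := hconv.segment_subset hy hx hz
  obtain ⟨i₀, j₀, hd, hsign, hpos⟩ := exists_sign_mul_nonpos_of_irreducible hirr
    (sub_ne_zero.2 hxy) (by simpa [sub_neg] using hlt) (by simpa [sub_pos] using hgt)
  have hJd := sum_sign_mul_mulVec_lt_zero
    (J := LinearMap.toMatrix' (fderiv ℝ g z : (Fin n → ℝ) →ₗ[ℝ] Fin n → ℝ))
    (hcoop z hzΩ) (hcol z hzΩ) (x - y) hd hsign (hpos z hzΩ)
  rw [LinearMap.toMatrix'_mulVec] at hJd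
  simpa [heq] using hJd

/-- Strict l1-contraction inequality under an irreducibility-type condition
on the off-diagonal Jacobian entries. -/
theorem stmt_2 (n : ℕ) (a b : Fin n → ℝ)
    (Ω : Set (Fin n → ℝ)) (hΩ : Ω = Set.univ.pi fun i => Set.Icc (a i) (b i))
    (hne : Ω.Nonempty)
    (g : (Fin n → ℝ) → (Fin n → ℝ)) (hg : ContDiff ℝ 1 g)
    (hcoop : ∀ x ∈ Ω, ∀ i j, i ≠ j → 0 ≤ fderiv ℝ g x (Pi.single j 1) i)
    (hcol : ∀ x ∈ Ω, ∀ j, ∑ i, fderiv ℝ g x (Pi.single j 1) i ≤ 0)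
    (hirr : ∀ K : Finset (Fin n), K.Nonempty → K ≠ Finset.univ →
      ∃ i ∈ K, ∃ j ∉ K, ∀ x ∈ Ω, 0 < fderiv ℝ g x (Pi.single j 1) i) :
    ∀ x ∈ Ω, ∀ y ∈ Ω, x ≠ y →
      ¬(∀ i, x i < y i) → ¬(∀ i, y i < x i) →
      ∑ i, Real.sign (x i - y i) * (g x i - g y i) < 0 :=
  stmt_2_general n a b Ω hΩ g hg hcoop hcol hirr
end

section
/- Let g : ℝ₊ⁿ → ℝⁿ be a Lipschitz cooperative vector field (nonnegative off-diagonal Jacobian entries a.e.) such that gᵢ(x) ≥ 0 whenever xᵢ = 0, and let φᵗ denote its flow. If g(0) ≥ 0 componentwise, then the trajectory t ↦ φᵗ(0) starting from the origin is componentwise nondecreasing in t, i.e., φˢ(0) ≤ φᵗ(0) whenever 0 ≤ s ≤ t (within the interval of existence). -/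
/-!
Cooperativity, known only almost everywhere, is first upgraded to Kamke's condition: `g i` is
nondecreasing in every coordinate other than `i`. By Fubini, almost every segment in a direction
`d ≥ 0` with `d i = 0` meets the exceptional null set in a null set of times; along such a segment
`g i` is Lipschitz with a.e. nonnegative derivative, hence nondecreasing, and Lipschitz continuity
passes this to every segment.

Kamke's condition yields the comparison principle for trajectories that start ordered: perturb their
difference by `ε e^{(K+1)t}` and look at the first time a coordinate vanishes, where the derivative
of that coordinate would have to be both positive and nonpositive. Comparing `t ↦ φᵗ 0` with
`t ↦ φ^{t+c} 0`, which starts at `φᶜ 0 ≥ 0`, gives the monotonicity.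
-/

open MeasureTheory Set Filter Topology

theorem LipschitzOnWith.le_of_ae_deriv_nonneg {f : ℝ → ℝ} {K : NNReal} {a b : ℝ} (hab : a ≤ b)
    (hf : LipschitzOnWith K f (Icc a b)) (hderiv : ∀ᵐ t, t ∈ Icc a b → 0 ≤ deriv f t) :
    f a ≤ f b := by
  rw [← uIcc_of_le hab] at hf
  have hFTC := hf.absolutelyContinuousOnInterval.integral_deriv_eq_sub
  have : 0 ≤ ∫ t in a..b, deriv f t := intervalIntegral.integral_nonneg_of_ae_restrict hab
    ((ae_restrict_iff' measurableSet_Icc).2 hderiv)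
  linarith

theorem LipschitzOnWith.apply_le_apply_add_mul_dist {α ι : Type*} [PseudoMetricSpace α]
    [Fintype ι] {g : α → ι → ℝ} {K : NNReal} {s : Set α} (hg : LipschitzOnWith K g s)
    {x y : α} (hx : x ∈ s) (hy : y ∈ s) (i : ι) : g x i ≤ g y i + K * dist x y := by
  have := (dist_le_pi_dist (g x) (g y) i).trans (hg.dist_le_mul x hx y hy)
  rw [Real.dist_eq] at this
  linarith [le_abs_self (g x i - g y i)]

theorem ContinuousLinearMap.apply_nonneg_of_offDiag_nonneg {ι : Type*} [Fintype ι]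
    [DecidableEq ι] (A : (ι → ℝ) →L[ℝ] ι → ℝ) {i : ι}
    (hA : ∀ j, i ≠ j → 0 ≤ A (Pi.single j 1) i) {d : ι → ℝ} (hd : 0 ≤ d) (hdi : d i = 0) :
    0 ≤ A d i := by
  have hsum : A d = ∑ j, d j • A (Pi.single j 1) := by
    conv_lhs => rw [← Finset.univ_sum_single d]
    simp only [map_sum, ← map_smul, ← Pi.single_smul, smul_eq_mul, mul_one]
  rw [hsum, Finset.sum_apply]
  refine Finset.sum_nonneg fun j _ => ?_
  rcases eq_or_ne i j with rfl | hij
  · simp [hdi]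
  · exact mul_nonneg (hd j) (hA j hij)

theorem ae_ae_add_smul {E : Type*} [NormedAddCommGroup E] [NormedSpace ℝ E] [MeasurableSpace E]
    [BorelSpace E] [SecondCountableTopology E] {μ : Measure E} [μ.IsAddRightInvariant]
    [SFinite μ] {p : E → Prop} (hp : ∀ᵐ x ∂μ, p x) (d : E) :
    ∀ᵐ z ∂μ, ∀ᵐ τ : ℝ, p (z + τ • d) := by
  set N := toMeasurable μ {x | ¬p x}
  have hN0 : μ N = 0 := by rw [measure_toMeasurable]; exact hp
  have hline : MeasurableSet {q : ℝ × E | q.2 + q.1 • d ∉ N} :=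
    ((continuous_snd.add (continuous_fst.smul continuous_const)).measurable
      (measurableSet_toMeasurable _ _)).compl
  have htranslate : ∀ᵐ τ : ℝ, ∀ᵐ z ∂μ, z + τ • d ∉ N := Eventually.of_forall fun τ =>
    measure_mono_null (fun z hz => by simpa using hz) <|
      (measure_preimage_add_right μ (τ • d) N).trans hN0
  filter_upwards [(Measure.ae_ae_comm hline).1 htranslate] with z hz
  filter_upwards [hz] with τ hτ
  by_contra h
  exact hτ (subset_toMeasurable _ _ h)

theorem lipschitzWith_const_add_smul {E : Type*} [NormedAddCommGroup E] [NormedSpace ℝ E]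
    (z d : E) : LipschitzWith ‖d‖₊ (fun τ : ℝ => z + τ • d) :=
  LipschitzWith.of_dist_le_mul fun τ σ => by
    rw [dist_eq_norm, dist_eq_norm, add_sub_add_left_eq_sub, ← sub_smul, norm_smul, mul_comm]
    rfl

theorem pos_of_hasDerivAt_pos_of_eq_zero {ι : Type*} [Fintype ι] {u u' : ℝ → ι → ℝ}
    (hu : ∀ t ≥ 0, HasDerivAt u (u' t) t) (h0 : ∀ i, 0 < u 0 i)
    (htouch : ∀ t > 0, 0 ≤ u t → ∀ i, u t i = 0 → 0 < u' t i) :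
    ∀ t ≥ 0, ∀ i, 0 < u t i := by
  by_contra! hbad
  obtain ⟨t₁, ht₁, i₁, hi₁⟩ := hbad
  set S := Ici 0 ∩ u ⁻¹' ⋃ i, {v | v i ≤ 0}
  have hSbdd : BddBelow S := ⟨0, fun t ht => ht.1⟩
  have hS : IsClosed S :=
    ContinuousOn.preimage_isClosed_of_isClosed
      (fun t ht => (hu t ht).continuousAt.continuousWithinAt) isClosed_Ici
      (isClosed_iUnion_of_finite fun i => isClosed_le (continuous_apply i) continuous_const)
  set t₀ := sInf S
  have ht₀S : t₀ ∈ S := hS.csInf_mem ⟨t₁, ht₁, mem_iUnion.2 ⟨i₁, hi₁⟩⟩ hSbdd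
  obtain ⟨ht₀, hmem⟩ := ht₀S
  obtain ⟨i, hi : u t₀ i ≤ 0⟩ := mem_iUnion.1 hmem
  have ht₀pos : 0 < t₀ := ht₀.lt_of_ne fun h => (h0 i).not_ge (h ▸ hi)
  have hbefore : ∀ᶠ t in 𝓝[<] t₀, ∀ j, 0 < u t j := by
    filter_upwards [Ioo_mem_nhdsLT ht₀pos] with t ht j
    by_contra! h
    exact (csInf_le hSbdd ⟨ht.1.le, mem_iUnion.2 ⟨j, h⟩⟩).not_gt ht.2
  have hu₀ : ∀ j, HasDerivAt (fun t => u t j) (u' t₀ j) t₀ := hasDerivAt_pi.1 (hu t₀ ht₀)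
  have hnonneg : 0 ≤ u t₀ := fun j =>
    ge_of_tendsto ((hu₀ j).continuousAt.tendsto.mono_left nhdsWithin_le_nhds)
      (hbefore.mono fun t h => (h j).le)
  have hzero : u t₀ i = 0 := le_antisymm hi (hnonneg i)
  have hslope : ∀ᶠ t in 𝓝[<] t₀, slope (fun t => u t i) t₀ t ≤ 0 := by
    filter_upwards [self_mem_nhdsWithin, hbefore] with t ht hpos
    rw [slope_def_field, hzero, sub_zero]
    exact div_nonpos_of_nonneg_of_nonpos (hpos i).le (sub_nonpos.2 (le_of_lt ht))
  exact (htouch t₀ ht₀pos hnonneg i hzero).not_ge <|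
    le_of_tendsto ((hasDerivAt_iff_tendsto_slope.1 (hu₀ i)).mono_left (nhdsLT_le_nhdsNE t₀)) hslope

section Cooperative

variable {ι : Type*} {s : Set (ι → ℝ)} {g : (ι → ℝ) → ι → ℝ} {K : NNReal}

/-- Kamke's condition. -/
def QuasiMonotoneOn (g : (ι → ℝ) → ι → ℝ) (s : Set (ι → ℝ)) : Prop :=
  ∀ x ∈ s, ∀ y ∈ s, x ≤ y → ∀ i, x i = y i → g x i ≤ g y i

theorem apply_le_apply_add_of_ae_cooperative_on_segment [Fintype ι] [DecidableEq ι]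
    (hs : IsUpperSet s) (hg : LipschitzOnWith K g s) {z d : ι → ℝ} (hz : z ∈ s) (hd : 0 ≤ d)
    {i : ι} (hdi : d i = 0)
    (hline : ∀ᵐ τ : ℝ, z + τ • d ∈ s → DifferentiableAt ℝ g (z + τ • d) ∧
      ∀ i j, i ≠ j → 0 ≤ fderiv ℝ g (z + τ • d) (Pi.single j 1) i) :
    g z i ≤ g (z + d) i := by
  have hseg : MapsTo (fun τ : ℝ => z + τ • d) (Icc 0 1) s := fun τ hτ =>
    hs (le_add_of_nonneg_right (smul_nonneg hτ.1 hd)) hz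
  have hlip : LipschitzOnWith (1 * (K * ‖d‖₊)) (fun τ : ℝ => g (z + τ • d) i) (Icc 0 1) :=
    (LipschitzWith.eval i).comp_lipschitzOnWith <|
      hg.comp (lipschitzWith_const_add_smul z d).lipschitzOnWith hseg
  have hderiv : ∀ᵐ τ : ℝ, τ ∈ Icc 0 1 → 0 ≤ deriv (fun τ : ℝ => g (z + τ • d) i) τ := by
    filter_upwards [hline] with τ hτ hτI
    obtain ⟨hdiff, hoff⟩ := hτ (hseg hτI)
    have hline' : HasDerivAt (fun τ : ℝ => z + τ • d) d τ := by
      simpa using ((hasDerivAt_id τ).smul_const d).const_add z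
    have hcomp : HasDerivAt (fun τ : ℝ => g (z + τ • d) i) (fderiv ℝ g (z + τ • d) d i) τ :=
      hasDerivAt_pi.1 (hdiff.hasFDerivAt.comp_hasDerivAt τ hline') i
    rw [hcomp.deriv]
    exact (fderiv ℝ g _).apply_nonneg_of_offDiag_nonneg (hoff i) hd hdi
  simpa using hlip.le_of_ae_deriv_nonneg zero_le_one hderiv

theorem quasiMonotoneOn_of_ae_cooperative [Fintype ι] [DecidableEq ι] (hs : IsUpperSet s)
    (hg : LipschitzOnWith K g s)
    (hae : ∀ᵐ x ∂(volume.restrict s), DifferentiableAt ℝ g x ∧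
      ∀ i j, i ≠ j → 0 ≤ fderiv ℝ g x (Pi.single j 1) i) :
    QuasiMonotoneOn g s := by
  intro x hx y hy hxy i hxyi
  have hae' := (ae_restrict_iff'₀ hs.ordConnected.nullMeasurableSet).1 hae
  have hlines := ae_ae_add_smul hae' (y - x)
  have hclose : ∀ δ > 0, g x i ≤ g y i + 2 * K * δ := by
    intro δ hδ
    have hbox : volume (Icc x (fun j => x j + δ)) ≠ 0 := by
      simp [Real.volume_Icc_pi, hδ]
    obtain ⟨z, ⟨hxz, hzx⟩, hz⟩ :=
      Measure.exists_mem_of_measure_ne_zero_of_ae hbox (ae_restrict_of_ae hlines)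
    have hzs : z ∈ s := hs hxz hx
    have hdist : dist z x ≤ δ := (dist_pi_le_iff hδ.le).2 fun j => by
      rw [Real.dist_eq, abs_le]
      constructor <;> linarith [hxz j, hzx j]
    have hdist' : dist (z + (y - x)) y ≤ δ := by
      rwa [dist_eq_norm, show z + (y - x) - y = z - x by abel, ← dist_eq_norm]
    have hzd : z + (y - x) ∈ s := hs (le_add_of_nonneg_right (sub_nonneg.2 hxy)) hzs
    have hseg := apply_le_apply_add_of_ae_cooperative_on_segment hs hg hzs (sub_nonneg.2 hxy)
      (sub_eq_zero.2 hxyi.symm) hz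
    have h1 := hg.apply_le_apply_add_mul_dist hx hzs i
    have h2 := hg.apply_le_apply_add_mul_dist hzd hy i
    rw [dist_comm] at h1
    nlinarith [K.coe_nonneg]
  refine le_of_forall_pos_le_add fun ε hε => ?_
  calc g x i ≤ g y i + 2 * K * (ε / (2 * K + 1)) := hclose _ (by positivity)
    _ ≤ g y i + ε := by
      gcongr
      rw [mul_div_assoc', div_le_iff₀ (by positivity)]
      linarith

theorem QuasiMonotoneOn.le_of_hasDerivAt [Fintype ι] (hqm : QuasiMonotoneOn g s)
    (hs : IsUpperSet s) (hg : LipschitzOnWith K g s) {X Y : ℝ → ι → ℝ}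
    (hX : ∀ t ≥ 0, X t ∈ s ∧ HasDerivAt X (g (X t)) t)
    (hY : ∀ t ≥ 0, Y t ∈ s ∧ HasDerivAt Y (g (Y t)) t) (h0 : X 0 ≤ Y 0) {t : ℝ} (ht : 0 ≤ t) :
    X t ≤ Y t := by
  have hexp : ∀ ε t, HasDerivAt (fun t => ε * Real.exp ((K + 1) * t))
      (ε * ((K + 1) * Real.exp ((K + 1) * t))) t := fun ε t => by
    simpa [mul_comm] using (((hasDerivAt_id t).const_mul ((K : ℝ) + 1)).exp).const_mul ε
  have hpert : ∀ ε > 0, ∀ t ≥ 0, ∀ i, 0 < Y t i - X t i + ε * Real.exp ((K + 1) * t) := by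
    intro ε hε
    refine pos_of_hasDerivAt_pos_of_eq_zero
      (u' := fun t i => g (Y t) i - g (X t) i + ε * ((K + 1) * Real.exp ((K + 1) * t)))
      (fun t ht => hasDerivAt_pi.2 fun i => ((hasDerivAt_pi.1 (hY t ht).2 i).sub
        (hasDerivAt_pi.1 (hX t ht).2 i)).add (hexp ε t))
      (fun i => by simpa using add_pos_of_nonneg_of_pos (sub_nonneg.2 (h0 i)) hε) ?_
    intro t ht hnonneg i hzero
    set E := ε * Real.exp ((K + 1) * t)
    have hE : 0 < E := by positivity
    -- `Y t + E` dominates `X t` and touches it in coordinate `i`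
    have hXz : X t ≤ fun j => Y t j + E := fun j => by
      have h : 0 ≤ Y t j - X t j + E := hnonneg j
      dsimp only
      linarith
    have hz : (fun j => Y t j + E) ∈ s := hs (fun j => le_add_of_nonneg_right hE.le) (hY t ht.le).1
    have hqm' := hqm _ (hX t ht.le).1 _ hz hXz i (by linarith)
    have hlip := hg.apply_le_apply_add_mul_dist hz (hY t ht.le).1 i
    have hdist : dist (fun j => Y t j + E) (Y t) ≤ E :=
      (dist_pi_le_iff hE.le).2 fun j => by simp [abs_of_pos hE]
    have : (K : ℝ) * dist (fun j => Y t j + E) (Y t) ≤ K * E := by gcongr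
    show 0 < g (Y t) i - g (X t) i + ε * ((K + 1) * Real.exp ((K + 1) * t))
    nlinarith
  intro i
  refine le_of_forall_pos_lt_add fun η hη => ?_
  have := hpert (η * Real.exp (-((K + 1) * t))) (by positivity) t ht i
  rw [mul_assoc, ← Real.exp_add, neg_add_cancel, Real.exp_zero, mul_one] at this
  linarith

end Cooperative

theorem stmt_5_general (n : ℕ) (K : NNReal)
    (P : Set (Fin n → ℝ)) (hP : P = {x | ∀ i, 0 ≤ x i})
    (g : (Fin n → ℝ) → (Fin n → ℝ)) (hg : LipschitzOnWith K g P)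
    (hae : ∀ᵐ x ∂(volume.restrict P),
      DifferentiableAt ℝ g x ∧
      ∀ i j, i ≠ j → 0 ≤ fderiv ℝ g x (Pi.single j 1) i)
    (φ : ℝ → (Fin n → ℝ) → (Fin n → ℝ))
    (hφ0 : ∀ x ∈ P, φ 0 x = x)
    (hφ : ∀ x ∈ P, ∀ t ≥ (0 : ℝ), φ t x ∈ P ∧ HasDerivAt (fun s => φ s x) (g (φ t x)) t) :
    ∀ s t : ℝ, 0 ≤ s → s ≤ t → ∀ i, φ s 0 i ≤ φ t 0 i := by
  have hPupper : IsUpperSet P := by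
    rw [hP]
    exact fun x y hxy hx i => (hx i).trans (hxy i)
  have h0 : (0 : Fin n → ℝ) ∈ P := by
    rw [hP]
    exact fun _ => le_rfl
  intro s t hs hst i
  have hX := hφ 0 h0
  have hshift : ∀ τ ≥ 0, φ (τ + (t - s)) 0 ∈ P ∧
      HasDerivAt (fun τ => φ (τ + (t - s)) 0) (g (φ (τ + (t - s)) 0)) τ := fun τ hτ =>
    have h := hX (τ + (t - s)) (by linarith)
    ⟨h.1, h.2.comp_add_const τ (t - s)⟩
  have hstart : φ 0 0 ≤ φ (0 + (t - s)) 0 := by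
    rw [hφ0 0 h0]
    simpa [hP, Pi.le_def] using (hshift 0 le_rfl).1
  simpa using (quasiMonotoneOn_of_ae_cooperative hPupper hg hae).le_of_hasDerivAt hPupper hg
    hX hshift hstart hs i

/-- For a cooperative vector field leaving the nonnegative orthant invariant
with g(0) ≥ 0, the trajectory from the origin is componentwise nondecreasing. -/
theorem stmt_5 (n : ℕ) (K : NNReal)
    (P : Set (Fin n → ℝ)) (hP : P = {x | ∀ i, 0 ≤ x i})
    (g : (Fin n → ℝ) → (Fin n → ℝ)) (hg : LipschitzOnWith K g P)
    (hae : ∀ᵐ x ∂(volume.restrict P),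
      DifferentiableAt ℝ g x ∧
      ∀ i j, i ≠ j → 0 ≤ fderiv ℝ g x (Pi.single j 1) i)
    (hinv : ∀ x ∈ P, ∀ i, x i = 0 → 0 ≤ g x i)
    (φ : ℝ → (Fin n → ℝ) → (Fin n → ℝ))
    (hφ0 : ∀ x ∈ P, φ 0 x = x)
    (hφ : ∀ x ∈ P, ∀ t ≥ (0 : ℝ), φ t x ∈ P ∧ HasDerivAt (fun s => φ s x) (g (φ t x)) t)
    (hsemi : ∀ x ∈ P, ∀ s ≥ (0 : ℝ), ∀ t ≥ (0 : ℝ), φ (t + s) x = φ t (φ s x))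
    (hg0 : ∀ i, 0 ≤ g 0 i) :
    ∀ s t : ℝ, 0 ≤ s → s ≤ t → ∀ i, φ s 0 i ≤ φ t 0 i :=
  stmt_5_general n K P hP g hg hae φ hφ0 hφ
end
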